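/- A linear map Λ on d×d complex matrices is completely positive if and only if its Choi matrix (I ⊗ Λ)(P_+) is positive semidefinite, which holds if and only if Λ can be written in Kraus form Λ(A) = Σ_i V_i A V_i† for finitely many matrices V_i. -/

import Mathlib

open scoped BigOperators ComplexConjugate ComplexOrder

open Matrix
noncomputable section

/-- The extension `(I_k ⊗ Λ)` of a map `Λ : M_d → M_{d'}`, acting blockwise
on matrices over `ℂ^k ⊗ ℂ^d`. -/
def matExt {d d' : ℕ} (k : ℕ) (Λ : Matrix (Fin d) (Fin d) ℂ → Matrix (Fin d') (Fin d') ℂ)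
    (ρ : Matrix (Fin k × Fin d) (Fin k × Fin d) ℂ) :
    Matrix (Fin k × Fin d') (Fin k × Fin d') ℂ :=
  fun p q => (Λ (Matrix.of fun i j => ρ (p.1, i) (q.1, j))) p.2 q.2

/-- The Choi matrix `(I ⊗ Λ)(P₊)` of `Λ : M_d → M_d`. -/
def choi {d : ℕ} (Λ : Matrix (Fin d) (Fin d) ℂ →ₗ[ℂ] Matrix (Fin d) (Fin d) ℂ) :
    Matrix (Fin d × Fin d) (Fin d × Fin d) ℂ :=
  fun p q => (1 / d : ℂ) * (Λ (Matrix.single p.1 q.1 1)) p.2 q.2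

/-!
`(I ⊗ Λ)(P₊)` is the Choi matrix, so complete positivity makes it positive semidefinite.
A positive semidefinite Choi matrix is a sum of rank-one terms `v vᴴ`; reshaping each vector
`v : ℂ^d ⊗ ℂ^d` into a `d × d` matrix gives Kraus operators, because a linear map is determined
by its Choi matrix and the Choi matrix of `A ↦ V A Vᴴ` is exactly that rank-one term.
Finally `I_k ⊗ (A ↦ V A Vᴴ)` is conjugation by `1 ⊗ V`, so a Kraus form is completely positive.
-/

namespace Matrix

theorem posSemidef_smul_iff {𝕜 n : Type*} [RCLike 𝕜] [Fintype n] {M : Matrix n n 𝕜} {c : 𝕜}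
    (hc : 0 < c) : (c • M).PosSemidef ↔ M.PosSemidef :=
  ⟨fun h => by simpa [smul_smul, inv_mul_cancel₀ hc.ne'] using h.smul (inv_pos.2 hc).le,
    fun h => h.smul hc.le⟩

variable {𝕜 n m ι : Type*} [RCLike 𝕜] [Fintype n] [DecidableEq n] [Fintype ι]

def choiMatrix (Λ : Matrix n n 𝕜 →ₗ[𝕜] Matrix m m 𝕜) : Matrix (n × m) (n × m) 𝕜 :=
  of fun p q => Λ (single p.1 q.1 1) p.2 q.2

theorem choiMatrix_injective :
    Function.Injective (choiMatrix : (Matrix n n 𝕜 →ₗ[𝕜] Matrix m m 𝕜) → _) := by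
  intro Λ₁ Λ₂ h
  refine ext_linearMap _ fun i j => LinearMap.ext_ring <| Matrix.ext fun a b => ?_
  exact congr_fun₂ h (i, a) (j, b)

def krausMap (V : ι → Matrix m n 𝕜) : Matrix n n 𝕜 →ₗ[𝕜] Matrix m m 𝕜 :=
  ∑ r, mulRightLinearMap m 𝕜 (V r)ᴴ ∘ₗ mulLeftLinearMap n 𝕜 (V r)

omit [DecidableEq n] in
@[simp]
theorem krausMap_apply (V : ι → Matrix m n 𝕜) (A : Matrix n n 𝕜) :
    krausMap V A = ∑ r, V r * A * (V r)ᴴ := by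
  simp [krausMap]

theorem choiMatrix_krausMap (V : ι → Matrix m n 𝕜) :
    choiMatrix (krausMap V) =
      ∑ r, vecMulVec (fun p => V r p.2 p.1) (star fun p => V r p.2 p.1) := by
  ext p q
  simp [choiMatrix, sum_apply, mul_apply, vecMulVec_apply, single_apply, ite_and]

theorem posSemidef_choiMatrix_iff_exists_eq_krausMap [Fintype m]
    (Λ : Matrix n n 𝕜 →ₗ[𝕜] Matrix m m 𝕜) :
    (choiMatrix Λ).PosSemidef ↔ ∃ (r : ℕ) (V : Fin r → Matrix m n 𝕜), Λ = krausMap V := by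
  rw [posSemidef_iff_eq_sum_vecMulVec]
  constructor
  · rintro ⟨r, v, hv⟩
    exact ⟨r, fun i => of fun a j => v i (j, a),
      choiMatrix_injective (by rw [hv, choiMatrix_krausMap]; rfl)⟩
  · rintro ⟨r, V, rfl⟩
    exact ⟨r, _, choiMatrix_krausMap V⟩

end Matrix

open scoped Kronecker

section matExt

variable {d d' k : ℕ}

theorem matExt_sum {ι : Type*} [Fintype ι]
    (Λ : ι → Matrix (Fin d) (Fin d) ℂ → Matrix (Fin d') (Fin d') ℂ)
    (ρ : Matrix (Fin k × Fin d) (Fin k × Fin d) ℂ) :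
    matExt k (fun A => ∑ r, Λ r A) ρ = ∑ r, matExt k (Λ r) ρ := by
  ext p q
  simp [matExt, Matrix.sum_apply]

theorem matExt_mul_mul_conjTranspose (V : Matrix (Fin d') (Fin d) ℂ)
    (ρ : Matrix (Fin k × Fin d) (Fin k × Fin d) ℂ) :
    matExt k (fun A => V * A * Vᴴ) ρ =
      ((1 : Matrix (Fin k) (Fin k) ℂ) ⊗ₖ V) * ρ * ((1 : Matrix (Fin k) (Fin k) ℂ) ⊗ₖ V)ᴴ := by
  ext p q
  simp [matExt, mul_apply, one_apply, Fintype.sum_prod_type, ite_mul, Finset.sum_mul,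
    apply_ite (starRingEnd ℂ), mul_ite]

theorem Matrix.PosSemidef.matExt_krausMap {ι : Type*} [Fintype ι]
    (V : ι → Matrix (Fin d') (Fin d) ℂ) {ρ : Matrix (Fin k × Fin d) (Fin k × Fin d) ℂ}
    (hρ : ρ.PosSemidef) :
    (matExt k (krausMap V) ρ).PosSemidef := by
  have krausMap_eq : ⇑(krausMap V) = fun A => ∑ r, V r * A * (V r)ᴴ := funext (krausMap_apply V)
  rw [krausMap_eq, matExt_sum]
  simp only [matExt_mul_mul_conjTranspose]
  exact posSemidef_sum _ fun r _ => hρ.mul_mul_conjTranspose_same _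

/-- `P₊ = |Ω⟩⟨Ω| / d` with `Ω = ∑ᵢ eᵢ ⊗ eᵢ`, the identity matrix read as a vector. -/
def maxEntangledVec (d : ℕ) : Fin d × Fin d → ℂ := fun p => (1 : Matrix (Fin d) (Fin d) ℂ) p.1 p.2

def maxEntangled (d : ℕ) : Matrix (Fin d × Fin d) (Fin d × Fin d) ℂ :=
  (d : ℂ)⁻¹ • vecMulVec (maxEntangledVec d) (star (maxEntangledVec d))

theorem posSemidef_maxEntangled : (maxEntangled d).PosSemidef :=
  (posSemidef_vecMulVec_self_star _).smul (by positivity)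

theorem matExt_maxEntangled (Λ : Matrix (Fin d) (Fin d) ℂ →ₗ[ℂ] Matrix (Fin d) (Fin d) ℂ) :
    matExt d Λ (maxEntangled d) = choi Λ := by
  ext p q
  have block_eq : (of fun i j => maxEntangled d (p.1, i) (q.1, j)) = (d : ℂ)⁻¹ • single p.1 q.1 1 := by
    ext i j
    simp [maxEntangled, maxEntangledVec, vecMulVec_apply, one_apply, single_apply, ← ite_and,
      and_comm]
  simp only [matExt, choi, block_eq, map_smul, Matrix.smul_apply, smul_eq_mul, one_div]

theorem choi_eq_smul_choiMatrix (Λ : Matrix (Fin d) (Fin d) ℂ →ₗ[ℂ] Matrix (Fin d) (Fin d) ℂ) :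
    choi Λ = (d : ℂ)⁻¹ • choiMatrix Λ := by
  ext p q
  simp [choi, choiMatrix]

theorem posSemidef_choi_iff (hd : 0 < d)
    (Λ : Matrix (Fin d) (Fin d) ℂ →ₗ[ℂ] Matrix (Fin d) (Fin d) ℂ) :
    (choi Λ).PosSemidef ↔ (choiMatrix Λ).PosSemidef := by
  rw [choi_eq_smul_choiMatrix, posSemidef_smul_iff (by positivity)]

end matExt

/-- Choi's theorem: `Λ` is completely positive iff its Choi matrix is positive
semidefinite, which holds iff `Λ` admits a Kraus decomposition. -/
theorem choi_theorem (d : ℕ) (hd : 0 < d)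
    (Λ : Matrix (Fin d) (Fin d) ℂ →ₗ[ℂ] Matrix (Fin d) (Fin d) ℂ) :
    ((∀ k : ℕ, ∀ ρ : Matrix (Fin k × Fin d) (Fin k × Fin d) ℂ,
        ρ.PosSemidef → (matExt k (fun A => Λ A) ρ).PosSemidef) ↔ (choi Λ).PosSemidef) ∧
    ((choi Λ).PosSemidef ↔
      ∃ (m : ℕ) (V : Fin m → Matrix (Fin d) (Fin d) ℂ),
        ∀ A, Λ A = ∑ i, V i * A * (V i)ᴴ) := by
  have choi_of_cp : (∀ k : ℕ, ∀ ρ : Matrix (Fin k × Fin d) (Fin k × Fin d) ℂ,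
      ρ.PosSemidef → (matExt k (fun A => Λ A) ρ).PosSemidef) → (choi Λ).PosSemidef :=
    fun hcp => matExt_maxEntangled Λ ▸ hcp d _ posSemidef_maxEntangled
  have choi_iff_krausMap : (choi Λ).PosSemidef ↔ ∃ (m : ℕ) (V : Fin m → _), Λ = krausMap V :=
    (posSemidef_choi_iff hd Λ).trans (posSemidef_choiMatrix_iff_exists_eq_krausMap Λ)
  refine ⟨⟨choi_of_cp, fun hchoi k ρ hρ => ?_⟩, ?_⟩
  · obtain ⟨m, V, rfl⟩ := choi_iff_krausMap.1 hchoi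
    exact hρ.matExt_krausMap V
  · simpa only [LinearMap.ext_iff, krausMap_apply] using choi_iff_krausMap
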